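/- Let (X, d) be a metric space, S ⊆ X a compact subset, and Q : X → ℝ a function. Suppose: (a) for every v ∈ S there exist δ(v) > 0, c(v) > 0, γ(v) ≥ 0 such that Q(u) − Y ≥ c(v) · (dist(u, S))^{2+γ(v)} for all u with d(u, v) < δ(v), where Y = inf Q; (b) every sequence (u_i) with Q(u_i) → Y has a subsequence converging to a point of S; and (c) dist(u, S) ≤ 1 for all u ∈ X. Then there exist c > 0 and γ ≥ 0 such that Q(u) − Y ≥ c · (dist(u, S))^{2+γ} for all u ∈ X. -/
import Mathlib

open Filter

/-- Compactness argument: local quantitative stability near each point of a compact set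
`S` of minimizers, subsequential convergence of minimizing sequences to `S`, and the
normalization `dist(u,S) ≤ 1` yield global quantitative stability. -/
theorem stmt8 {X : Type*} [MetricSpace X] (S : Set X) (hS : IsCompact S)
    (Q : X → ℝ) (Y : ℝ) (hY : IsGLB (Set.range Q) Y)
    (hloc : ∀ v ∈ S, ∃ δ > (0:ℝ), ∃ c > (0:ℝ), ∃ γ ≥ (0:ℝ),
      ∀ u : X, dist u v < δ → Q u - Y ≥ c * (Metric.infDist u S) ^ (2 + γ))
    (hcpt : ∀ u : ℕ → X, Tendsto (fun i => Q (u i)) atTop (nhds Y) →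
      ∃ v ∈ S, ∃ φ : ℕ → ℕ, StrictMono φ ∧ Tendsto (u ∘ φ) atTop (nhds v))
    (hbd : ∀ u : X, Metric.infDist u S ≤ 1) :
    ∃ c > (0:ℝ), ∃ γ ≥ (0:ℝ),
      ∀ u : X, Q u - Y ≥ c * (Metric.infDist u S) ^ (2 + γ) := by
  have hQY : ∀ u : X, 0 ≤ Q u - Y := by
    intro u
    have := hY.1 (Set.mem_range_self u)
    linarith
  rcases S.eq_empty_or_nonempty with hSe | hSne
  · refine ⟨1, one_pos, 0, le_refl _, fun u => ?_⟩
    rw [hSe, Metric.infDist_empty, Real.zero_rpow (by norm_num)]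
    simpa using hQY u
  -- choose local data
  choose! δ hδ c hc γ hγ hQloc using hloc
  -- finite subcover
  obtain ⟨t, htS, htcov⟩ := hS.elim_nhds_subcover (fun v => Metric.ball v (δ v / 2))
    (fun v hv => Metric.ball_mem_nhds v (by linarith [hδ v hv]))
  have htne : t.Nonempty := by
    obtain ⟨v, hv⟩ := hSne
    obtain ⟨w, hw, _⟩ := Set.mem_iUnion₂.1 (htcov hv)
    exact ⟨w, hw⟩
  set δ₀ : ℝ := t.inf' htne (fun v => δ v / 2) with hδ₀def
  have hδ₀pos : 0 < δ₀ := by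
    refine (Finset.lt_inf'_iff htne).2 fun v hv => ?_
    linarith [hδ v (htS v hv)]
  set γmax : ℝ := t.sup' htne γ with hγmaxdef
  have hγmax : 0 ≤ γmax := by
    obtain ⟨v, hv⟩ := htne
    exact le_trans (hγ v (htS v hv)) (Finset.le_sup' γ hv)
  set cmin : ℝ := t.inf' htne c with hcmindef
  have hcmin : 0 < cmin := by
    exact (Finset.lt_inf'_iff htne).2 fun v hv => hc v (htS v hv)
  -- far case: existence of ε
  have hfar : ∃ ε > (0:ℝ), ∀ u : X, δ₀ ≤ Metric.infDist u S → ε ≤ Q u - Y := by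
    by_contra h
    push_neg at h
    have h' : ∀ n : ℕ, ∃ x : X, δ₀ ≤ Metric.infDist x S ∧ Q x - Y < 1 / (n + 1) := by
      intro n
      obtain ⟨x, hx1, hx2⟩ := h (1 / (n + 1)) (by positivity)
      exact ⟨x, hx1, by linarith⟩
    choose u hu1 hu2 using h'
    have hQtend : Tendsto (fun i => Q (u i)) atTop (nhds Y) := by
      have h1 : Tendsto (fun n : ℕ => Y + 1 / (n + 1 : ℝ)) atTop (nhds (Y + 0)) :=
        tendsto_const_nhds.add tendsto_one_div_add_atTop_nhds_zero_nat
      rw [add_zero] at h1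
      refine tendsto_of_tendsto_of_tendsto_of_le_of_le tendsto_const_nhds h1
        (fun n => by linarith [hQY (u n)]) (fun n => by linarith [hu2 n])
    obtain ⟨v, hv, φ, hφ, htend⟩ := hcpt u hQtend
    have hd : Tendsto (fun n => dist (u (φ n)) v) atTop (nhds 0) :=
      tendsto_iff_dist_tendsto_zero.1 htend
    have := (hd.eventually (eventually_lt_nhds hδ₀pos)).exists
    obtain ⟨n, hn⟩ := this
    have : Metric.infDist (u (φ n)) S ≤ dist (u (φ n)) v := Metric.infDist_le_dist_of_mem hv
    linarith [hu1 (φ n)]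
  obtain ⟨ε, hε, hfar⟩ := hfar
  refine ⟨min cmin ε, lt_min hcmin hε, γmax, hγmax, fun u => ?_⟩
  have hd0 : 0 ≤ Metric.infDist u S := Metric.infDist_nonneg
  rcases lt_or_ge (Metric.infDist u S) δ₀ with hlt | hge
  · -- near case
    obtain ⟨v, hvS, hvd⟩ := (Metric.infDist_lt_iff hSne).1 hlt
    obtain ⟨w, hw, hvw⟩ := Set.mem_iUnion₂.1 (htcov hvS)
    have hwS : w ∈ S := htS w hw
    have hδ₀le : δ₀ ≤ δ w / 2 := Finset.inf'_le _ hw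
    have hvw' : dist v w < δ w / 2 := Metric.mem_ball.1 hvw
    have huw : dist u w < δ w := by
      calc dist u w ≤ dist u v + dist v w := dist_triangle u v w
        _ < δ₀ + δ w / 2 := by linarith
        _ ≤ δ w := by linarith
    have hloc := hQloc w hwS u huw
    have hcw : cmin ≤ c w := Finset.inf'_le _ hw
    have hγw : γ w ≤ γmax := Finset.le_sup' _ hw
    have hpow : (Metric.infDist u S) ^ (2 + γmax) ≤ (Metric.infDist u S) ^ (2 + γ w) := by
      rcases eq_or_lt_of_le hd0 with h0 | h0
      · rw [← h0, Real.zero_rpow (ne_of_gt (by linarith [hγ w hwS] : (0:ℝ) < 2 + γ w)), Real.zero_rpow (ne_of_gt (by linarith : (0:ℝ) < 2 + γmax))]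
      · exact Real.rpow_le_rpow_of_exponent_ge h0 (hbd u) (by linarith)
    have hpnn : 0 ≤ (Metric.infDist u S) ^ (2 + γmax) := Real.rpow_nonneg hd0 _
    calc min cmin ε * (Metric.infDist u S) ^ (2 + γmax)
        ≤ c w * (Metric.infDist u S) ^ (2 + γ w) := by
          apply mul_le_mul (le_trans (min_le_left _ _) hcw) hpow hpnn (le_of_lt (hc w hwS))
      _ ≤ Q u - Y := hloc
  · -- far case
    have h1 : (Metric.infDist u S) ^ (2 + γmax) ≤ 1 :=
      Real.rpow_le_one hd0 (hbd u) (by linarith)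
    calc min cmin ε * (Metric.infDist u S) ^ (2 + γmax)
        ≤ min cmin ε * 1 := by
          apply mul_le_mul_of_nonneg_left h1 (le_of_lt (lt_min hcmin hε))
      _ = min cmin ε := mul_one _
      _ ≤ ε := min_le_right _ _
      _ ≤ Q u - Y := hfar u hge
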